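/- Let p : ℝ^d → ℝ be a probability density, α > 0, γ > 0, x ∈ ℝ^d with p_{α,γ}(x) > 0, and let a, g ∈ ℝ be arbitrary (playing the roles of the time-derivatives α̇ and γ̇ of the interpolation coefficients). Assume that y ↦ (1 + ‖y‖)·p(y)·φ_{α,γ}(x', y) is integrable for all x' in a neighborhood of x and that differentiation under the integral sign in x is justified by an integrable dominating function. Then ∫_{ℝ^d} (a·y + (g/γ)·(x − α·y)) · p(y | x) dy = (a/α)·x + γ·((a·γ)/α − g)·∇_x log p_{α,γ}(x); that is, the flow-matching velocity field (the posterior expectation of α̇·x₀ + γ̇·ε given x_t = x, where ε = (x − α·x₀)/γ) equals (α̇/α)·x + γ·(α̇·γ/α − γ̇)·s(x), with s the score of the noised marginal. -/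

import Mathlib

/-!
Differentiating the Gaussian kernel, `∇ₓ φ_{α,γ}(x, y) = -γ⁻² φ_{α,γ}(x, y) (x - α y)`, and
differentiating under the integral sign gives Tweedie's formula
`∇ log p_{α,γ}(x) = -γ⁻² (x - α E[y | x])`. Both sides of the claim are therefore affine
functions of the posterior mean `E[y | x]`, and their coefficients agree.
-/

open MeasureTheory Filter

/-- The (unnormalized) Gaussian transition kernel
`φ_{α,γ}(x, y) = exp(−‖x − α·y‖²/(2γ²))`. -/
noncomputable def gaussKernel (d : ℕ) (α γ : ℝ)
    (x y : EuclideanSpace ℝ (Fin d)) : ℝ :=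
  Real.exp (-‖x - α • y‖ ^ 2 / (2 * γ ^ 2))

open InnerProductSpace Topology

theorem HasGradientAt.log {H : Type*} [NormedAddCommGroup H] [InnerProductSpace ℝ H]
    [CompleteSpace H] {f : H → ℝ} {g x : H} (hf : HasGradientAt f g x) (hx : f x ≠ 0) :
    HasGradientAt (fun x => Real.log (f x)) ((f x)⁻¹ • g) x := by
  rw [hasGradientAt_iff_hasFDerivAt, map_smul]
  exact (hasGradientAt_iff_hasFDerivAt.mp hf).log hx

theorem hasGradientAt_integral_of_dominated_of_gradient_le {X H : Type*} [MeasurableSpace X]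
    {μ : Measure X} [NormedAddCommGroup H] [InnerProductSpace ℝ H] [CompleteSpace H]
    {F : H → X → ℝ} {G : H → X → H} {x₀ : H} {s : Set H} {bound : X → ℝ} (hs : s ∈ 𝓝 x₀)
    (hF_meas : ∀ᶠ x in 𝓝 x₀, AEStronglyMeasurable (F x) μ) (hF_int : Integrable (F x₀) μ)
    (hG_meas : AEStronglyMeasurable (G x₀) μ) (h_bound : ∀ᵐ a ∂μ, ∀ x ∈ s, ‖G x a‖ ≤ bound a)
    (bound_integrable : Integrable bound μ)
    (h_diff : ∀ᵐ a ∂μ, ∀ x ∈ s, HasGradientAt (F · a) (G x a) x) :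
    HasGradientAt (fun x => ∫ a, F x a ∂μ) (∫ a, G x₀ a ∂μ) x₀ := by
  have hcomm : ∫ a, toDual ℝ H (G x₀ a) ∂μ = toDual ℝ H (∫ a, G x₀ a ∂μ) :=
    (toDual ℝ H).toLinearIsometry.integral_comp_comm _
  rw [hasGradientAt_iff_hasFDerivAt, ← hcomm]
  refine hasFDerivAt_integral_of_dominated_of_fderiv_le (F' := fun x a => toDual ℝ H (G x a))
    hs hF_meas hF_int
    ((toDual ℝ H).continuous.comp_aestronglyMeasurable hG_meas) ?_ bound_integrable ?_
  · filter_upwards [h_bound] with a ha x hx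
    simpa using ha x hx
  · filter_upwards [h_diff] with a ha x hx
    exact hasGradientAt_iff_hasFDerivAt.mp (ha x hx)

namespace MeasureTheory

variable {E : Type*} [NormedAddCommGroup E] [MeasurableSpace E] [OpensMeasurableSpace E]
  {μ : Measure E} {f : E → ℝ}

theorem Integrable.of_one_add_norm_mul (hf : Integrable (fun y => (1 + ‖y‖) * f y) μ) :
    Integrable f μ := by
  have hbdd : ∀ y : E, ‖(1 + ‖y‖)⁻¹‖ ≤ 1 := fun y => by
    rw [norm_inv, Real.norm_of_nonneg (by positivity)]
    exact inv_le_one_of_one_le₀ (by simp)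
  refine (hf.bdd_mul (by fun_prop) (.of_forall hbdd)).congr (.of_forall fun y => ?_)
  simp [inv_mul_cancel_left₀ (by positivity : (1 + ‖y‖) ≠ 0)]

theorem Integrable.smul_sub_smul_of_one_add_norm_mul [NormedSpace ℝ E]
    [SecondCountableTopology E]
    (hf : Integrable (fun y => (1 + ‖y‖) * f y) μ) (u : E) (c : ℝ) :
    Integrable (fun y => f y • (u - c • y)) μ := by
  have hbdd : ∀ y : E, ‖(1 + ‖y‖)⁻¹ • y‖ ≤ 1 := fun y => by
    rw [norm_smul, norm_inv, Real.norm_of_nonneg (by positivity), inv_mul_le_one₀ (by positivity)]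
    linarith
  have hself : Integrable (fun y => f y • y) μ := by
    refine (hf.smul_bdd 1 (by fun_prop) (.of_forall hbdd)).congr (.of_forall fun y => ?_)
    change ((1 + ‖y‖) * f y) • ((1 + ‖y‖)⁻¹ • y) = f y • y
    rw [smul_smul, mul_right_comm, mul_inv_cancel₀ (by positivity), one_mul]
  simp_rw [smul_sub, smul_comm (f _) c]
  exact (hf.of_one_add_norm_mul.smul_const u).sub (hself.smul c)

theorem integral_smul_sub_smul_of_one_add_norm_mul [NormedSpace ℝ E] [CompleteSpace E]
    [SecondCountableTopology E]
    (hf : Integrable (fun y => (1 + ‖y‖) * f y) μ) (u : E) (c : ℝ) :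
    ∫ y, f y • (u - c • y) ∂μ = (∫ y, f y ∂μ) • u - c • ∫ y, f y • y ∂μ := by
  have hself : Integrable (fun y => c • f y • y) μ := by
    simpa [smul_comm c] using hf.smul_sub_smul_of_one_add_norm_mul 0 (-c)
  simp_rw [smul_sub, smul_comm (f _) c]
  rw [integral_sub (hf.of_one_add_norm_mul.smul_const u) hself, integral_smul_const,
    integral_smul]

end MeasureTheory

theorem hasGradientAt_const_mul_gaussKernel (d : ℕ) (α γ c : ℝ)
    (x y : EuclideanSpace ℝ (Fin d)) :
    HasGradientAt (fun x => c * gaussKernel d α γ x y)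
      (-(γ ^ 2)⁻¹ • (c * gaussKernel d α γ x y) • (x - α • y)) x := by
  have h := ((((hasFDerivAt_id x).sub_const (α • y)).norm_sq.neg.mul_const
    (2 * γ ^ 2)⁻¹).exp).const_mul c
  have hfun : (fun x => c * gaussKernel d α γ x y)
      = fun x => c * Real.exp (-‖x - α • y‖ ^ 2 * (2 * γ ^ 2)⁻¹) := by
    simp only [gaussKernel, div_eq_mul_inv]
  rw [hasGradientAt_iff_hasFDerivAt, hfun]
  refine h.congr_fderiv ?_
  ext v
  simp only [id_eq, Pi.neg_apply, mul_inv_rev, neg_mul, map_sub, map_smul,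
    ContinuousLinearMap.comp_id, smul_neg, neg_apply, smul_apply, sub_apply, coe_innerSL_apply,
    smul_eq_mul, nsmul_eq_mul, Nat.cast_ofNat, gaussKernel, div_eq_mul_inv, neg_smul, map_neg,
    toDual_apply_apply, neg_inj]
  ring

theorem hasGradientAt_integral_mul_gaussKernel {d : ℕ} {p : EuclideanSpace ℝ (Fin d) → ℝ}
    {α γ ε : ℝ} {x : EuclideanSpace ℝ (Fin d)} {bound : EuclideanSpace ℝ (Fin d) → ℝ}
    (hInt : ∀ᶠ x' in 𝓝 x,
      Integrable (fun y => (1 + ‖y‖) * (p y * gaussKernel d α γ x' y)))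
    (hε : 0 < ε) (hbound : Integrable bound)
    (hdom : ∀ y, ∀ x' ∈ Metric.ball x ε,
      ‖gradient (fun x'' => p y * gaussKernel d α γ x'' y) x'‖ ≤ bound y) :
    HasGradientAt (fun x' => ∫ y, p y * gaussKernel d α γ x' y)
      (-(γ ^ 2)⁻¹ • ∫ y, (p y * gaussKernel d α γ x y) • (x - α • y)) x := by
  have hx := hInt.self_of_nhds
  have hG : Integrable (fun y => -(γ ^ 2)⁻¹ • (p y * gaussKernel d α γ x y) • (x - α • y)) :=
    (hx.smul_sub_smul_of_one_add_norm_mul x α).smul (-(γ ^ 2)⁻¹)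
  have hgrad (y x' : EuclideanSpace ℝ (Fin d)) :=
    hasGradientAt_const_mul_gaussKernel d α γ (p y) x' y
  rw [← integral_smul]
  refine hasGradientAt_integral_of_dominated_of_gradient_le
    (G := fun x' y => -(γ ^ 2)⁻¹ • (p y * gaussKernel d α γ x' y) • (x' - α • y))
    (Metric.ball_mem_nhds x hε)
    (hInt.mono fun x' h => h.of_one_add_norm_mul.aestronglyMeasurable) hx.of_one_add_norm_mul
    hG.aestronglyMeasurable (.of_forall fun y x' hx' => ?_) hbound
    (.of_forall fun y x' _ => hgrad y x')
  rw [← (hgrad y x').gradient]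
  exact hdom y x' hx'

theorem flow_matching_velocity_eq_score_general (d : ℕ)
    (p : EuclideanSpace ℝ (Fin d) → ℝ)
    (α γ : ℝ) (hα : 0 < α) (hγ : 0 < γ)
    (x : EuclideanSpace ℝ (Fin d)) (a g : ℝ)
    (hpos : 0 < ∫ y, p y * gaussKernel d α γ x y)
    (hInt : ∀ᶠ x' in nhds x,
      Integrable (fun y => (1 + ‖y‖) * (p y * gaussKernel d α γ x' y)))
    (hDom : ∃ (ε : ℝ) (bound : EuclideanSpace ℝ (Fin d) → ℝ), 0 < ε ∧
      Integrable bound ∧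
      ∀ y, ∀ x' ∈ Metric.ball x ε,
        ‖gradient (fun x'' => p y * gaussKernel d α γ x'' y) x'‖ ≤ bound y) :
    (∫ y, ((p y * gaussKernel d α γ x y) / ∫ z, p z * gaussKernel d α γ x z) •
        (a • y + (g / γ) • (x - α • y)))
      = (a / α) • x + (γ * ((a * γ) / α - g)) •
          gradient (fun x' => Real.log (∫ y, p y * gaussKernel d α γ x' y)) x := by
  obtain ⟨ε, bound, hε, hbound, hdom⟩ := hDom
  have hx := hInt.self_of_nhds
  set F := ∫ z, p z * gaussKernel d α γ x z
  set m := ∫ y, (p y * gaussKernel d α γ x y) • y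
  have hscore : gradient (fun x' => Real.log (∫ y, p y * gaussKernel d α γ x' y)) x
      = F⁻¹ • -(γ ^ 2)⁻¹ • (F • x - α • m) := by
    rw [← integral_smul_sub_smul_of_one_add_norm_mul hx]
    exact ((hasGradientAt_integral_mul_gaussKernel hInt hε hbound hdom).log hpos.ne').gradient
  have hmean : (∫ y, ((p y * gaussKernel d α γ x y) / F) • (a • y + (g / γ) • (x - α • y)))
      = F⁻¹ • (F • (g / γ) • x - (g / γ * α - a) • m) := by
    have hpt : ∀ y, ((p y * gaussKernel d α γ x y) / F) • (a • y + (g / γ) • (x - α • y))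
        = F⁻¹ • (p y * gaussKernel d α γ x y) • ((g / γ) • x - (g / γ * α - a) • y) := by
      intro y
      match_scalars <;> ring
    simp_rw [hpt]
    rw [integral_smul, integral_smul_sub_smul_of_one_add_norm_mul hx]
  rw [hmean, hscore]
  match_scalars <;> field_simp <;> ring

/-- **Flow-matching velocity field in terms of the score.**
Let `p : ℝ^d → ℝ` be a probability density, `α > 0`, `γ > 0`, `x ∈ ℝ^d` with
`p_{α,γ}(x) > 0`, and let `a, g ∈ ℝ` play the roles of `α̇` and `γ̇`.  Assume
`y ↦ (1 + ‖y‖) p(y) φ_{α,γ}(x', y)` is integrable for `x'` near `x` and that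
differentiation under the integral sign in `x` is justified by an integrable
dominating function.  Then
`∫ (a·y + (g/γ)(x − α·y)) p(y | x) dy = (a/α)·x + γ((aγ)/α − g)·∇_x log p_{α,γ}(x)`. -/
theorem flow_matching_velocity_eq_score (d : ℕ)
    (p : EuclideanSpace ℝ (Fin d) → ℝ)
    (hp0 : ∀ y, 0 ≤ p y) (hpI : Integrable p) (hpP : ∫ y, p y = 1)
    (α γ : ℝ) (hα : 0 < α) (hγ : 0 < γ)
    (x : EuclideanSpace ℝ (Fin d)) (a g : ℝ)
    (hpos : 0 < ∫ y, p y * gaussKernel d α γ x y)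
    (hInt : ∀ᶠ x' in nhds x,
      Integrable (fun y => (1 + ‖y‖) * (p y * gaussKernel d α γ x' y)))
    (hDom : ∃ (ε : ℝ) (bound : EuclideanSpace ℝ (Fin d) → ℝ), 0 < ε ∧
      Integrable bound ∧
      ∀ y, ∀ x' ∈ Metric.ball x ε,
        ‖gradient (fun x'' => p y * gaussKernel d α γ x'' y) x'‖ ≤ bound y) :
    (∫ y, ((p y * gaussKernel d α γ x y) / ∫ z, p z * gaussKernel d α γ x z) •
        (a • y + (g / γ) • (x - α • y)))
      = (a / α) • x + (γ * ((a * γ) / α - g)) •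
          gradient (fun x' => Real.log (∫ y, p y * gaussKernel d α γ x' y)) x :=
  flow_matching_velocity_eq_score_general d p α γ hα hγ x a g hpos hInt hDom
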